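/- arXiv:math/0205206 — 2 statements merged into one kernel-verified Lean document; each statement's English description precedes it below -/
import Mathlib

section
/- For all n ≥ 1, there exists a bijection between the set of permutations of {1,...,n} avoiding 132, 2341, and 3241, and the set of tilings of a 1×(n-1) rectangle with tiles of size 1×1 and 1×2, where each 1×1 tile is colored red or blue. -/
/-- A function `π : Fin n → Fin n` contains the pattern `p : Fin k → ℕ` if there is a
strictly increasing choice of indices whose images under `π` have the same pairwise
order relations as the entries of `p`. -/
def Contains {n k : ℕ} (π : Fin n → Fin n) (p : Fin k → ℕ) : Prop :=
  ∃ f : Fin k → Fin n, StrictMono f ∧ ∀ i j, p i < p j ↔ π (f i) < π (f j)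

/-- `π` avoids the pattern `p`. -/
def Avoids {n k : ℕ} (π : Fin n → Fin n) (p : Fin k → ℕ) : Prop := ¬ Contains π p

/-- The set of permutations of `Fin n` avoiding the patterns 132, 2341 and 3241,
i.e. the 132-avoiding two-stack sortable permutations. -/
def TSS132 (n : ℕ) : Set (Fin n → Fin n) :=
  {π | Function.Bijective π ∧ Avoids π ![1,3,2] ∧ Avoids π ![2,3,4,1] ∧ Avoids π ![3,2,4,1]}

/-- The Pell numbers. -/
def pell : ℕ → ℕ
  | 0 => 0
  | 1 => 1
  | n+2 => 2 * pell (n+1) + pell n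

/-- A tiling of a `1 × L` rectangle: a list of tiles, each either a colored `1 × 1`
tile (`Sum.inl b` with color `b : Bool`) or a `1 × 2` tile (`Sum.inr ()`), whose
lengths sum to `L`. -/
def Tiling (L : ℕ) : Type :=
  {l : List (Bool ⊕ Unit) // (l.map (Sum.elim (fun _ => 1) (fun _ => 2))).sum = L}

/-! In a 132-avoiding permutation every entry to the left of the maximum `n` exceeds every entry
to its right. Avoiding 2341 and 3241 as well then forces `n` to stand first, last, or second
right after `n - 1`, and deleting these entries leaves a permutation of the same class. Hence the
class satisfies `a (n + 3) = 2 a (n + 2) + a (n + 1)`, which is the recursion of the tilings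
according to whether the first tile is a colored square or a domino. -/

open Function

section Patterns

variable {n m k : ℕ} {π : Fin n → Fin n} {σ : Fin m → Fin m} {p : Fin k → ℕ}

theorem Contains.of_comp {g h : Fin m → Fin n} (hg : StrictMono g) (hh : StrictMono h)
    (hcomm : π ∘ g = h ∘ σ) (hσ : Contains σ p) : Contains π p := by
  obtain ⟨f, hf, hiff⟩ := hσ
  refine ⟨g ∘ f, hg.comp hf, fun i j => ?_⟩
  rw [hiff, comp_apply, comp_apply, ← comp_apply (f := π), ← comp_apply (f := π), hcomm,
    comp_apply, comp_apply, hh.lt_iff_lt]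

theorem contains_of_comp_of_forall_mem_range {g h : Fin m → Fin n} (hg : StrictMono g)
    (hh : StrictMono h) (hcomm : π ∘ g = h ∘ σ) {f : Fin k → Fin n} (hf : StrictMono f)
    (hiff : ∀ i j, p i < p j ↔ π (f i) < π (f j)) (hrange : ∀ i, f i ∈ Set.range g) :
    Contains σ p := by
  choose f' hf' using hrange
  refine ⟨f', fun i j hij => hg.lt_iff_lt.mp ?_, fun i j => ?_⟩
  · simpa only [hf'] using hf hij
  · rw [hiff, ← hf', ← hf', ← comp_apply (f := π), ← comp_apply (f := π) (g := g), hcomm,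
      comp_apply, comp_apply, hh.lt_iff_lt]

theorem contains_132 {a b c : Fin n} (hab : a < b) (hbc : b < c) (hac : π a < π c)
    (hcb : π c < π b) : Contains π ![1, 3, 2] := by
  refine ⟨![a, b, c], ?_, ?_⟩
  · refine Fin.strictMono_iff_lt_succ.mpr fun i => ?_
    fin_cases i <;> simpa
  · intro i j
    fin_cases i <;> fin_cases j <;> simp <;> order

theorem contains_2341 {a b c d : Fin n} (hab : a < b) (hbc : b < c) (hcd : c < d)
    (hda : π d < π a) (hab' : π a < π b) (hbc' : π b < π c) : Contains π ![2, 3, 4, 1] := by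
  refine ⟨![a, b, c, d], ?_, ?_⟩
  · refine Fin.strictMono_iff_lt_succ.mpr fun i => ?_
    fin_cases i <;> simpa
  · intro i j
    fin_cases i <;> fin_cases j <;> simp <;> order

theorem contains_3241 {a b c d : Fin n} (hab : a < b) (hbc : b < c) (hcd : c < d)
    (hdb : π d < π b) (hba : π b < π a) (hac : π a < π c) : Contains π ![3, 2, 4, 1] := by
  refine ⟨![a, b, c, d], ?_, ?_⟩
  · refine Fin.strictMono_iff_lt_succ.mpr fun i => ?_
    fin_cases i <;> simpa
  · intro i j
    fin_cases i <;> fin_cases j <;> simp <;> order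

theorem avoids_of_lt (h : n < k) : Avoids π p :=
  fun ⟨f, hf, _⟩ => (Fintype.card_le_of_injective f hf.injective).not_gt (by simpa using h)

end Patterns

section Shapes

variable {n : ℕ} (σ : Fin n → Fin n)

def consMax : Fin (n + 1) → Fin (n + 1) :=
  Fin.cons (Fin.last n) (Fin.castSucc ∘ σ)

def snocMax : Fin (n + 1) → Fin (n + 1) :=
  Fin.snoc (α := fun _ => Fin (n + 1)) (Fin.castSucc ∘ σ) (Fin.last n)

def consSubmaxMax : Fin (n + 2) → Fin (n + 2) :=
  Fin.cons (Fin.last n).castSucc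
    (Fin.cons (Fin.last (n + 1)) (Fin.castSucc ∘ Fin.castSucc ∘ σ))

@[simp] theorem consMax_zero : consMax σ 0 = Fin.last n := rfl

@[simp] theorem consMax_succ (i : Fin n) : consMax σ i.succ = (σ i).castSucc := rfl

@[simp] theorem snocMax_last : snocMax σ (Fin.last n) = Fin.last n := by simp [snocMax]

@[simp] theorem snocMax_castSucc (i : Fin n) : snocMax σ i.castSucc = (σ i).castSucc := by
  simp [snocMax]

@[simp] theorem consSubmaxMax_zero : consSubmaxMax σ 0 = (Fin.last n).castSucc := rfl

@[simp] theorem consSubmaxMax_one : consSubmaxMax σ 1 = Fin.last (n + 1) := rfl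

@[simp] theorem consSubmaxMax_succ_succ (i : Fin n) :
    consSubmaxMax σ i.succ.succ = (σ i).castSucc.castSucc := rfl

theorem consMax_injective : Injective (consMax (n := n)) := fun _ _ h =>
  funext fun i => Fin.castSucc_injective _ (congrFun h i.succ)

theorem snocMax_injective : Injective (snocMax (n := n)) := fun _ _ h =>
  funext fun i => by simpa using congrFun h i.castSucc

theorem consSubmaxMax_injective : Injective (consSubmaxMax (n := n)) := fun _ _ h =>
  funext fun i => by simpa using congrFun h i.succ.succ

variable {σ}

theorem consMax_injective_iff : Injective (consMax σ) ↔ Injective σ := by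
  simp [consMax, Fin.cons_injective_iff, (Fin.castSucc_injective n).of_comp_iff,
    Fin.castSucc_ne_last]

theorem snocMax_injective_iff : Injective (snocMax σ) ↔ Injective σ := by
  simp [snocMax, Fin.snoc_injective_iff, (Fin.castSucc_injective n).of_comp_iff]

theorem consSubmaxMax_injective_iff : Injective (consSubmaxMax σ) ↔ Injective σ := by
  simp [consSubmaxMax, Fin.cons_injective_iff, (Fin.castSucc_injective _).of_comp_iff]

end Shapes

section ShapeContains

variable {n k : ℕ} {σ : Fin n → Fin n}

theorem contains_consMax_iff {p : Fin (k + 1) → ℕ} (hp : ∃ j, p 0 < p j) :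
    Contains (consMax σ) p ↔ Contains σ p := by
  refine ⟨fun ⟨f, hf, hiff⟩ => ?_, .of_comp Fin.strictMono_succ Fin.strictMono_castSucc rfl⟩
  refine contains_of_comp_of_forall_mem_range Fin.strictMono_succ Fin.strictMono_castSucc rfl hf
    hiff fun i => ?_
  obtain ⟨j, hj⟩ := hp
  have hf0 : f 0 ≠ 0 := by
    intro h0
    have := (hiff 0 j).mp hj
    rw [h0, consMax_zero] at this
    exact (Fin.le_last _).not_gt this
  rw [Fin.range_succ]
  exact fun hi => hf0 (nonpos_iff_eq_zero.mp (hi ▸ hf.monotone (Fin.zero_le i)))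

theorem contains_snocMax_iff {p : Fin (k + 1) → ℕ} (hp : ∃ j, p (Fin.last k) < p j) :
    Contains (snocMax σ) p ↔ Contains σ p := by
  have hcomm : snocMax σ ∘ Fin.castSucc = Fin.castSucc ∘ σ := funext (snocMax_castSucc σ)
  refine ⟨fun ⟨f, hf, hiff⟩ => ?_,
    .of_comp Fin.strictMono_castSucc Fin.strictMono_castSucc hcomm⟩
  refine contains_of_comp_of_forall_mem_range Fin.strictMono_castSucc Fin.strictMono_castSucc
    hcomm hf hiff fun i => ?_
  obtain ⟨j, hj⟩ := hp
  have hfl : f (Fin.last k) ≠ Fin.last n := by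
    intro hl
    have := (hiff _ j).mp hj
    rw [hl, snocMax_last] at this
    exact (Fin.le_last _).not_gt this
  rw [Fin.range_castSucc]
  show (f i : ℕ) < n
  exact (Fin.le_def.mp (hf.monotone (Fin.le_last i))).trans_lt (Fin.val_lt_last hfl)

theorem Fin.mem_range_succ_succ {x : Fin (n + 2)} (hx : 2 ≤ (x : ℕ)) :
    x ∈ Set.range (Fin.succ ∘ Fin.succ) :=
  ⟨⟨x - 2, by omega⟩, Fin.ext (by simp; omega)⟩

theorem contains_consSubmaxMax_iff {p : Fin (k + 2) → ℕ} (hp : ∃ j, 1 < j ∧ p 0 < p j) :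
    Contains (consSubmaxMax σ) p ↔ Contains σ p := by
  have hcomm :
      consSubmaxMax σ ∘ (Fin.succ ∘ Fin.succ) = (Fin.castSucc ∘ Fin.castSucc) ∘ σ := rfl
  have hg : StrictMono (Fin.succ ∘ Fin.succ : Fin n → Fin (n + 2)) :=
    Fin.strictMono_succ.comp Fin.strictMono_succ
  have hh : StrictMono (Fin.castSucc ∘ Fin.castSucc : Fin n → Fin (n + 2)) :=
    Fin.strictMono_castSucc.comp Fin.strictMono_castSucc
  refine ⟨fun ⟨f, hf, hiff⟩ => ?_, .of_comp hg hh hcomm⟩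
  refine contains_of_comp_of_forall_mem_range hg hh hcomm hf hiff fun i => ?_
  obtain ⟨j, hj1, hj⟩ := hp
  have hfj : 2 ≤ (f j : ℕ) := by
    have := hf (show (0 : Fin (k + 2)) < 1 by simp)
    have := hf hj1
    simp only [Fin.lt_def] at *
    omega
  obtain ⟨y, hy⟩ := Fin.mem_range_succ_succ hfj
  have hf0 : consSubmaxMax σ (f 0) < (Fin.last n).castSucc := by
    refine ((hiff 0 j).mp hj).trans ?_
    rw [← hy, comp_apply, consSubmaxMax_succ_succ]
    simp [Fin.lt_def, Fin.is_lt]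
  have hf0_ne_zero : f 0 ≠ 0 := fun h => by simp [h] at hf0
  have hf0_ne_one : f 0 ≠ 1 := fun h => by simp [h, Fin.lt_def] at hf0
  refine Fin.mem_range_succ_succ ((?_ : 2 ≤ (f 0 : ℕ)).trans (hf.monotone (Fin.zero_le i)))
  simp only [ne_eq, Fin.ext_iff, Fin.val_zero, Fin.val_one] at hf0_ne_zero hf0_ne_one
  omega

end ShapeContains

section ShapeMembership

variable {n : ℕ} {σ : Fin n → Fin n}

theorem consMax_mem_TSS132_iff : consMax σ ∈ TSS132 (n + 1) ↔ σ ∈ TSS132 n := by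
  simp only [TSS132, Set.mem_ofPred_eq, Avoids, ← Finite.injective_iff_bijective,
    consMax_injective_iff, contains_consMax_iff (by decide : ∃ j, ![1, 3, 2] 0 < ![1, 3, 2] j),
    contains_consMax_iff (by decide : ∃ j, ![2, 3, 4, 1] 0 < ![2, 3, 4, 1] j),
    contains_consMax_iff (by decide : ∃ j, ![3, 2, 4, 1] 0 < ![3, 2, 4, 1] j)]

theorem snocMax_mem_TSS132_iff : snocMax σ ∈ TSS132 (n + 1) ↔ σ ∈ TSS132 n := by
  simp only [TSS132, Set.mem_ofPred_eq, Avoids, ← Finite.injective_iff_bijective,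
    snocMax_injective_iff,
    contains_snocMax_iff (by decide : ∃ j, ![1, 3, 2] (Fin.last 2) < ![1, 3, 2] j),
    contains_snocMax_iff (by decide : ∃ j, ![2, 3, 4, 1] (Fin.last 3) < ![2, 3, 4, 1] j),
    contains_snocMax_iff (by decide : ∃ j, ![3, 2, 4, 1] (Fin.last 3) < ![3, 2, 4, 1] j)]

theorem consSubmaxMax_mem_TSS132_iff : consSubmaxMax σ ∈ TSS132 (n + 2) ↔ σ ∈ TSS132 n := by
  simp only [TSS132, Set.mem_ofPred_eq, Avoids, ← Finite.injective_iff_bijective,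
    consSubmaxMax_injective_iff,
    contains_consSubmaxMax_iff (by decide : ∃ j, 1 < j ∧ ![1, 3, 2] 0 < ![1, 3, 2] j),
    contains_consSubmaxMax_iff (by decide : ∃ j, 1 < j ∧ ![2, 3, 4, 1] 0 < ![2, 3, 4, 1] j),
    contains_consSubmaxMax_iff (by decide : ∃ j, 1 < j ∧ ![3, 2, 4, 1] 0 < ![3, 2, 4, 1] j)]

end ShapeMembership

section ShapeDecomposition

variable {n : ℕ} {π : Fin (n + 1) → Fin (n + 1)}

theorem exists_consMax_eq (hπ : Injective π) (h0 : π 0 = Fin.last n) :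
    ∃ σ, consMax σ = π := by
  have h : ∀ i : Fin n, π i.succ ≠ Fin.last n := fun i hi =>
    Fin.succ_ne_zero i (hπ (hi.trans h0.symm))
  refine ⟨fun i => (π i.succ).castPred (h i), funext fun i => ?_⟩
  cases i using Fin.cases <;> simp [h0]

theorem exists_snocMax_eq (hπ : Injective π) (hl : π (Fin.last n) = Fin.last n) :
    ∃ σ, snocMax σ = π := by
  have h : ∀ i : Fin n, π i.castSucc ≠ Fin.last n := fun i hi =>
    Fin.castSucc_ne_last i (hπ (hi.trans hl.symm))
  refine ⟨fun i => (π i.castSucc).castPred (h i), funext fun i => ?_⟩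
  cases i using Fin.lastCases <;> simp [hl]

theorem exists_consSubmaxMax_eq {π : Fin (n + 2) → Fin (n + 2)} (hπ : Injective π)
    (h0 : π 0 = (Fin.last n).castSucc) (h1 : π 1 = Fin.last (n + 1)) :
    ∃ σ, consSubmaxMax σ = π := by
  have hmax : ∀ i : Fin n, π i.succ.succ ≠ Fin.last (n + 1) := fun i hi =>
    Fin.succ_ne_zero i (Fin.succ_injective _ (hπ (hi.trans h1.symm)))
  have hsubmax : ∀ i : Fin n, (π i.succ.succ).castPred (hmax i) ≠ Fin.last n := fun i hi => by
    rw [Fin.castPred_eq_iff_eq_castSucc, ← h0] at hi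
    exact Fin.succ_ne_zero _ (hπ hi)
  refine ⟨fun i => ((π i.succ.succ).castPred (hmax i)).castPred (hsubmax i),
    funext fun i => ?_⟩
  cases i using Fin.cases with
  | zero => simp [h0]
  | succ i => cases i using Fin.cases <;> simp [h1]

end ShapeDecomposition

section MaxPosition

variable {n : ℕ} {π : Fin n → Fin n}

theorem lt_of_avoids_132 (hπ : Injective π) (h132 : Avoids π ![1, 3, 2]) {i k l : Fin n}
    (hk : ∀ j, π j ≤ π k) (hik : i < k) (hkl : k < l) : π l < π i := by
  by_contra! hil
  have hil' : π i < π l := hil.lt_of_ne (hπ.ne (hik.trans hkl).ne)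
  exact h132 (contains_132 hik hkl hil' ((hk l).lt_of_ne (hπ.ne hkl.ne')))

theorem val_le_one_of_max_of_lt (hπ : Injective π) (h132 : Avoids π ![1, 3, 2])
    (h2341 : Avoids π ![2, 3, 4, 1]) (h3241 : Avoids π ![3, 2, 4, 1]) {k l : Fin n}
    (hk : ∀ j, π j ≤ π k) (hkl : k < l) : (k : ℕ) ≤ 1 := by
  by_contra! hk1
  let a : Fin n := ⟨0, by omega⟩
  let b : Fin n := ⟨1, by omega⟩
  have hab : a < b := by simp [a, b, Fin.lt_def]
  have hbk : b < k := by simpa [b, Fin.lt_def] using hk1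
  have hbk' : π b < π k := (hk b).lt_of_ne (hπ.ne hbk.ne)
  rcases lt_or_gt_of_ne (hπ.ne hab.ne) with hab' | hba'
  · exact h2341 (contains_2341 hab hbk hkl (lt_of_avoids_132 hπ h132 hk (hab.trans hbk) hkl)
      hab' hbk')
  · exact h3241 (contains_3241 hab hbk hkl (lt_of_avoids_132 hπ h132 hk hbk hkl) hba'
      ((hk a).lt_of_ne (hπ.ne (hab.trans hbk).ne)))

theorem TSS132.max_position {π : Fin (n + 2) → Fin (n + 2)} (hπ : π ∈ TSS132 (n + 2)) :
    π 0 = Fin.last (n + 1) ∨ π (Fin.last (n + 1)) = Fin.last (n + 1) ∨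
      π 0 = (Fin.last n).castSucc ∧ π 1 = Fin.last (n + 1) := by
  obtain ⟨⟨hinj, hsurj⟩, h132, h2341, h3241⟩ := hπ
  obtain ⟨k, hk⟩ := hsurj (Fin.last (n + 1))
  have hkmax : ∀ j, π j ≤ π k := fun j => hk ▸ Fin.le_last _
  obtain hkl | rfl := (Fin.le_last k).lt_or_eq
  swap
  · exact .inr (.inl hk)
  obtain hk0 | hk1 : (k : ℕ) = 0 ∨ (k : ℕ) = 1 := by
    have := val_le_one_of_max_of_lt hinj h132 h2341 h3241 hkmax hkl
    omega
  · obtain rfl : k = 0 := Fin.ext hk0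
    exact .inl hk
  obtain rfl : k = 1 := Fin.ext hk1
  refine .inr (.inr ⟨?_, hk⟩)
  obtain ⟨j, hj⟩ := hsurj (Fin.last n).castSucc
  by_contra h0
  have hj0 : j ≠ 0 := by rintro rfl; exact h0 hj
  have hj1 : j ≠ 1 := by rintro rfl; simp [hk, Fin.ext_iff] at hj
  have h01 : π 0 ≠ Fin.last (n + 1) := hk ▸ hinj.ne (by simp)
  have hj0' := lt_of_avoids_132 hinj h132 hkmax (i := 0) (by simp) (show 1 < j by
    simp only [ne_eq, Fin.ext_iff, Fin.val_zero, Fin.val_one, Fin.lt_def] at hj0 hj1 ⊢; omega)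
  simp only [ne_eq, Fin.ext_iff, Fin.lt_def, hj, Fin.val_last, Fin.val_castSucc] at h0 h01 hj0'
  omega

end MaxPosition

section Equivalences

variable {n : ℕ}

theorem consMax_ne_snocMax (σ τ : Fin (n + 1) → Fin (n + 1)) : consMax σ ≠ snocMax τ :=
  fun h => Fin.castSucc_ne_last _ ((congrFun h 0).trans (snocMax_castSucc τ 0)).symm

theorem consMax_ne_consSubmaxMax (σ : Fin (n + 2) → Fin (n + 2))
    (τ : Fin (n + 1) → Fin (n + 1)) :
    consMax σ ≠ consSubmaxMax τ :=
  fun h => Fin.castSucc_ne_last _ (congrFun h 0).symm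

theorem snocMax_ne_consSubmaxMax (σ : Fin (n + 2) → Fin (n + 2))
    (τ : Fin (n + 1) → Fin (n + 1)) :
    snocMax σ ≠ consSubmaxMax τ := fun h => by
  have := congrFun h (Fin.last n).succ.succ
  rw [consSubmaxMax_succ_succ, Fin.succ_last, Fin.succ_last, snocMax_last] at this
  exact Fin.castSucc_ne_last _ this.symm

def TSS132.consOrSnocMax : TSS132 n ⊕ TSS132 n → TSS132 (n + 1) :=
  Sum.elim (Subtype.map consMax fun _ => consMax_mem_TSS132_iff.2)
    (Subtype.map snocMax fun _ => snocMax_mem_TSS132_iff.2)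

def TSS132.consSubmaxMax : TSS132 n → TSS132 (n + 2) :=
  Subtype.map _root_.consSubmaxMax fun _ => consSubmaxMax_mem_TSS132_iff.2

theorem TSS132.consOrSnocMax_injective : Injective (TSS132.consOrSnocMax (n := n + 1)) :=
  .sumElim (Subtype.map_injective _ consMax_injective)
    (Subtype.map_injective _ snocMax_injective)
    fun σ τ h => consMax_ne_snocMax σ.1 τ.1 (congrArg Subtype.val h)

theorem TSS132.mem_range_consOrSnocMax {π : TSS132 (n + 1)}
    (h : π.1 0 = Fin.last n ∨ π.1 (Fin.last n) = Fin.last n) :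
    π ∈ Set.range TSS132.consOrSnocMax := by
  obtain ⟨π, hπ⟩ := π
  rcases h with h | h
  · obtain ⟨σ, rfl⟩ := exists_consMax_eq hπ.1.1 h
    exact ⟨.inl ⟨σ, consMax_mem_TSS132_iff.1 hπ⟩, rfl⟩
  · obtain ⟨σ, rfl⟩ := exists_snocMax_eq hπ.1.1 h
    exact ⟨.inr ⟨σ, snocMax_mem_TSS132_iff.1 hπ⟩, rfl⟩

noncomputable def TSS132.sumEquivTwo : TSS132 1 ⊕ TSS132 1 ≃ TSS132 2 :=
  .ofBijective TSS132.consOrSnocMax ⟨TSS132.consOrSnocMax_injective, fun π => by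
    -- in size 2, position 1 is the last one
    rcases TSS132.max_position π.2 with h | h | ⟨-, h⟩
    exacts [TSS132.mem_range_consOrSnocMax (.inl h), TSS132.mem_range_consOrSnocMax (.inr h),
      TSS132.mem_range_consOrSnocMax (.inr h)]⟩

noncomputable def TSS132.sumEquiv (n : ℕ) :
    (TSS132 (n + 2) ⊕ TSS132 (n + 2)) ⊕ TSS132 (n + 1) ≃ TSS132 (n + 3) := by
  refine .ofBijective (Sum.elim TSS132.consOrSnocMax TSS132.consSubmaxMax) ⟨?_, fun π => ?_⟩
  · refine .sumElim TSS132.consOrSnocMax_injective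
      (Subtype.map_injective _ consSubmaxMax_injective) ?_
    rintro (σ | σ) τ h
    · exact consMax_ne_consSubmaxMax σ.1 τ.1 (congrArg Subtype.val h)
    · exact snocMax_ne_consSubmaxMax σ.1 τ.1 (congrArg Subtype.val h)
  · rcases TSS132.max_position π.2 with h | h | ⟨h0, h1⟩
    · obtain ⟨σ, hσ⟩ := TSS132.mem_range_consOrSnocMax (.inl h)
      exact ⟨.inl σ, hσ⟩
    · obtain ⟨σ, hσ⟩ := TSS132.mem_range_consOrSnocMax (.inr h)
      exact ⟨.inl σ, hσ⟩
    · obtain ⟨σ, hσ⟩ := exists_consSubmaxMax_eq π.2.1.1 h0 h1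
      exact ⟨.inr ⟨σ, consSubmaxMax_mem_TSS132_iff.1 (hσ ▸ π.2)⟩, Subtype.ext hσ⟩

end Equivalences

instance : Unique (TSS132 1) where
  default := ⟨id, bijective_id, avoids_of_lt (by omega), avoids_of_lt (by omega),
    avoids_of_lt (by omega)⟩
  uniq _ := Subsingleton.elim _ _

section Tilings

instance : Unique (Tiling 0) where
  default := ⟨[], rfl⟩
  uniq := fun ⟨l, h⟩ => Subtype.ext <| by
    cases l with
    | nil => rfl
    | cons a _ => cases a <;> simp at h

def Tiling.boolProdEquiv : Bool × Tiling 0 ≃ Tiling 1 where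
  toFun | (b, ⟨r, h⟩) => ⟨.inl b :: r, by simp [h]⟩
  invFun
    | ⟨.inl b :: r, h⟩ => (b, ⟨r, by simpa using h⟩)
    | ⟨.inr () :: _, h⟩ => absurd h (by simp; omega)
  left_inv _ := rfl
  right_inv
    | ⟨.inl _ :: _, _⟩ => rfl
    | ⟨.inr () :: _, h⟩ => absurd h (by simp; omega)

def Tiling.sumEquiv (L : ℕ) : Bool × Tiling (L + 1) ⊕ Tiling L ≃ Tiling (L + 2) where
  toFun
    | .inl (b, ⟨r, h⟩) => ⟨.inl b :: r, by simp [h]; omega⟩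
    | .inr ⟨r, h⟩ => ⟨.inr () :: r, by simp [h]; omega⟩
  invFun
    | ⟨.inl b :: r, h⟩ => .inl (b, ⟨r, by simp at h; omega⟩)
    | ⟨.inr () :: r, h⟩ => .inr ⟨r, by simp at h; omega⟩
  left_inv
    | .inl _ => rfl
    | .inr _ => rfl
  right_inv
    | ⟨.inl _ :: _, _⟩ => rfl
    | ⟨.inr () :: _, _⟩ => rfl

end Tilings

noncomputable def TSS132.equivTiling : ∀ m, TSS132 (m + 1) ≃ Tiling m
  | 0 => Equiv.ofUnique (TSS132 1) (Tiling 0)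
  | 1 => TSS132.sumEquivTwo.symm.trans <| ((equivTiling 0).sumCongr (equivTiling 0)).trans <|
      (Equiv.boolProdEquivSum _).symm.trans Tiling.boolProdEquiv
  | m + 2 => (TSS132.sumEquiv m).symm.trans <|
      (((equivTiling (m + 1)).sumCongr (equivTiling (m + 1))).sumCongr (equivTiling m)).trans <|
      ((Equiv.boolProdEquivSum _).symm.sumCongr (.refl _)).trans (Tiling.sumEquiv m)

theorem stmt_5 (n : ℕ) (hn : 1 ≤ n) : Nonempty (↥(TSS132 n) ≃ Tiling (n-1)) := by
  obtain ⟨m, rfl⟩ := Nat.exists_eq_add_of_le' hn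
  exact ⟨TSS132.equivTiling m⟩
end

section
/- For all n ≥ 4, the number of permutations of {1,...,n} avoiding the patterns 132, 2341, 3241, and 54321 equals (4/3)n³ - 12n² + (128/3)n - 52. -/
/-!
A permutation in `TSS132` of length at least 3 either ends with its maximum (`σ ⊕ 1`), starts
with it (`1 ⊖ σ`), or starts with its two largest values in increasing order (`12 ⊖ σ`): when
the maximum sits at a position `q ≥ 2` other than the last one, 132-avoidance forces every
earlier value above the last one, and then the first two values, the maximum and the last
value form 2341 or 3241. In each case `σ` runs over the permutations of the same kind, and
prepending the maximum lengthens the longest decreasing subsequence by exactly one. Writing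
`a(n, d)` for the number of these permutations avoiding the decreasing pattern of length `d`,
this gives `a(n + 3, d + 3) = a(n + 2, d + 3) + a(n + 2, d + 2) + a(n + 1, d + 2)` with
`a(n, 2) = 1`, and the cases `d = 3, 4, 5` are solved in turn.
-/

def ContainsPattern {α : Type*} [LinearOrder α] {m k : ℕ} (g : Fin m → α)
    (p : Fin k → ℕ) : Prop :=
  ∃ f : Fin k → Fin m, StrictMono f ∧ ∀ i j, p i < p j ↔ g (f i) < g (f j)

section ContainsPattern

variable {α β : Type*} [LinearOrder α] [LinearOrder β] {m m' k : ℕ} {g : Fin m → α}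
  {p : Fin k → ℕ}

theorem containsPattern_comp_left_iff {h : α → β} (hh : StrictMono h) :
    ContainsPattern (h ∘ g) p ↔ ContainsPattern g p :=
  exists_congr fun f => and_congr_right fun _ =>
    forall₂_congr fun i j => by rw [Function.comp_apply, Function.comp_apply, hh.lt_iff_lt]

theorem ContainsPattern.of_comp {G : Fin m' → α} {e : Fin m → Fin m'} (he : StrictMono e)
    (h : ContainsPattern (G ∘ e) p) : ContainsPattern G p := by
  obtain ⟨f, hf, hfp⟩ := h
  exact ⟨e ∘ f, he.comp hf, hfp⟩

theorem not_containsPattern_of_lt (hmk : m < k) : ¬ ContainsPattern g p := by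
  rintro ⟨f, hf, -⟩
  have := Fintype.card_le_of_injective f hf.injective
  simp only [Fintype.card_fin] at this
  omega

theorem not_containsPattern_of_strictMono (hg : StrictMono g) {i j : Fin k} (hij : i < j)
    (hp : p j < p i) : ¬ ContainsPattern g p := by
  rintro ⟨f, hf, hfp⟩
  exact (hg (hf hij)).asymm ((hfp j i).mp hp)

theorem containsPattern_of_forall_lt (hp : Function.Injective p) {f : Fin k → Fin m}
    (hf : StrictMono f) (hfp : ∀ i j, p i < p j → g (f i) < g (f j)) : ContainsPattern g p := by
  refine ⟨f, hf, fun i j => ⟨hfp i j, fun hg => ?_⟩⟩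
  rcases lt_trichotomy (p i) (p j) with h | h | h
  · exact h
  · exact absurd hg (by rw [hp h]; exact lt_irrefl _)
  · exact absurd (hfp j i h) hg.asymm

theorem containsPattern_132 {i j l : Fin m} (hij : i < j) (hjl : j < l) (h₁ : g i < g l)
    (h₂ : g l < g j) : ContainsPattern g ![1, 3, 2] := by
  refine containsPattern_of_forall_lt (by decide) (f := ![i, j, l]) ?_ fun a b hab => ?_
  · simp [Fin.strictMono_iff_lt_succ, Fin.forall_fin_succ, *]
  · fin_cases a <;> fin_cases b <;> simp at hab ⊢ <;> order

theorem containsPattern_2341 {i j l q : Fin m} (hij : i < j) (hjl : j < l) (hlq : l < q)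
    (h₁ : g q < g i) (h₂ : g i < g j) (h₃ : g j < g l) : ContainsPattern g ![2, 3, 4, 1] := by
  refine containsPattern_of_forall_lt (by decide) (f := ![i, j, l, q]) ?_ fun a b hab => ?_
  · simp [Fin.strictMono_iff_lt_succ, Fin.forall_fin_succ, *]
  · fin_cases a <;> fin_cases b <;> simp at hab ⊢ <;> order

theorem containsPattern_3241 {i j l q : Fin m} (hij : i < j) (hjl : j < l) (hlq : l < q)
    (h₁ : g q < g j) (h₂ : g j < g i) (h₃ : g i < g l) : ContainsPattern g ![3, 2, 4, 1] := by
  refine containsPattern_of_forall_lt (by decide) (f := ![i, j, l, q]) ?_ fun a b hab => ?_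
  · simp [Fin.strictMono_iff_lt_succ, Fin.forall_fin_succ, *]
  · fin_cases a <;> fin_cases b <;> simp at hab ⊢ <;> order

theorem exists_strictMono_comp_eq {e : Fin m → Fin m'} (he : StrictMono e) {f : Fin k → Fin m'}
    (hf : StrictMono f) (hfe : ∀ i, f i ∈ Set.range e) :
    ∃ f' : Fin k → Fin m, StrictMono f' ∧ e ∘ f' = f := by
  choose f' hf' using hfe
  exact ⟨f', fun i j hij => he.lt_iff_lt.mp (by simpa only [hf'] using hf hij), funext hf'⟩

theorem containsPattern_comp_of_forall_mem_range {G : Fin m' → α} {e : Fin m → Fin m'}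
    (he : StrictMono e) {f : Fin k → Fin m'} (hf : StrictMono f)
    (hfp : ∀ i j, p i < p j ↔ G (f i) < G (f j)) (hfe : ∀ i, f i ∈ Set.range e) :
    ContainsPattern (G ∘ e) p := by
  obtain ⟨f', hf', rfl⟩ := exists_strictMono_comp_eq he hf hfe
  exact ⟨f', hf', hfp⟩

theorem val_le_val_of_strictMono {f : Fin k → Fin m} (hf : StrictMono f) (i : Fin k) :
    i.val ≤ (f i).val := by
  obtain ⟨i, hi⟩ := i
  induction i with
  | zero => exact Nat.zero_le _
  | succ i ih =>
    exact (ih (by omega)).trans_lt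
      (hf (show (⟨i, by omega⟩ : Fin k) < ⟨i + 1, hi⟩ from i.lt_succ_self))

theorem mem_range_addNat_iff {s : ℕ} {x : Fin (m + s)} :
    x ∈ Set.range (Fin.addNat · s) ↔ s ≤ x.val :=
  ⟨by rintro ⟨y, rfl⟩; simp, fun h => ⟨⟨x - s, by omega⟩, Fin.ext (by simp; omega)⟩⟩

theorem containsPattern_iff_of_prefix_gt {s : ℕ} {G : Fin (m + s) → α}
    (hG : ∀ x : Fin (m + s), x.val < s → ∀ y : Fin m, G (y.addNat s) < G x)
    {p : Fin (k + 1) → ℕ} {j : Fin (k + 1)} (hj : s ≤ j.val) (hpj : p 0 < p j) :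
    ContainsPattern G p ↔ ContainsPattern (fun y : Fin m => G (y.addNat s)) p := by
  refine ⟨fun ⟨f, hf, hfp⟩ => ?_, fun h => h.of_comp (Fin.strictMono_addNat s)⟩
  have hf0 : s ≤ (f 0).val := by
    by_contra! h
    obtain ⟨y, hy⟩ := mem_range_addNat_iff.2 (hj.trans (val_le_val_of_strictMono hf j))
    have hlt := (hfp 0 j).1 hpj
    rw [← hy] at hlt
    exact (hG (f 0) h y).asymm hlt
  refine containsPattern_comp_of_forall_mem_range (Fin.strictMono_addNat s) hf hfp fun i =>
    mem_range_addNat_iff.2 (hf0.trans (hf.monotone (Fin.zero_le i)))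

theorem containsPattern_snoc_iff {v : α} (hv : ∀ i, g i < v) {p : Fin (k + 1) → ℕ}
    {i : Fin (k + 1)} (hpi : p (Fin.last k) < p i) :
    ContainsPattern (Fin.snoc g v : Fin (m + 1) → α) p ↔ ContainsPattern g p := by
  have hG : (Fin.snoc g v : Fin (m + 1) → α) ∘ Fin.castSucc = g :=
    funext fun x => Fin.snoc_castSucc ..
  refine ⟨fun ⟨f, hf, hfp⟩ => ?_, fun h => (hG ▸ h).of_comp Fin.strictMono_castSucc⟩
  have hmax : ∀ x, (Fin.snoc g v : Fin (m + 1) → α) x ≤ v := fun x => by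
    induction x using Fin.lastCases <;> simp [(hv _).le]
  have hlast : f (Fin.last k) ≠ Fin.last m := fun h => by
    have hlt := (hfp _ _).1 hpi
    rw [h, Fin.snoc_last] at hlt
    exact hlt.not_ge (hmax _)
  refine hG ▸ containsPattern_comp_of_forall_mem_range Fin.strictMono_castSucc hf hfp
    fun i' => ?_
  rw [Fin.range_castSucc]
  exact (hf.monotone (Fin.le_last i')).trans_lt (Fin.lt_last_iff_ne_last.2 hlast)

end ContainsPattern

def decPattern (d : ℕ) : Fin d → ℕ := fun i => d - i

section Decreasing

variable {α : Type*} [LinearOrder α] {m d : ℕ} {g : Fin m → α}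

theorem decPattern_strictAnti : StrictAnti (decPattern d) := fun i j hij => by
  simp only [decPattern]; omega

theorem containsPattern_decPattern_iff :
    ContainsPattern g (decPattern d) ↔
      ∃ f : Fin d → Fin m, StrictMono f ∧ StrictAnti (g ∘ f) :=
  exists_congr fun _ => and_congr_right fun _ =>
    ⟨fun h _ _ hij => (h _ _).1 (decPattern_strictAnti hij),
      fun h _ _ => decPattern_strictAnti.lt_iff_gt.trans h.lt_iff_gt.symm⟩

theorem containsPattern_cons_decPattern_iff {v : α} (hv : ∀ i, g i < v) :
    ContainsPattern (Fin.cons v g : Fin (m + 1) → α) (decPattern (d + 1)) ↔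
      ContainsPattern g (decPattern d) := by
  simp only [containsPattern_decPattern_iff]
  constructor
  · rintro ⟨f, hf, hanti⟩
    obtain ⟨f', hf', hff'⟩ := exists_strictMono_comp_eq Fin.strictMono_succ
      (hf.comp Fin.strictMono_succ) fun i => by
        rw [Fin.range_succ]
        exact ((Fin.zero_le _).trans_lt (hf i.succ_pos)).ne'
    have hg : g ∘ f' = (Fin.cons v g ∘ f) ∘ Fin.succ := by
      rw [Function.comp_assoc, ← hff']; rfl
    exact ⟨f', hf', hg ▸ hanti.comp_strictMono Fin.strictMono_succ⟩
  · rintro ⟨f, hf, hanti⟩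
    refine ⟨Fin.cons 0 (Fin.succ ∘ f),
      Fin.strictMono_cons.2 ⟨fun _ => Fin.succ_pos _, Fin.strictMono_succ.comp hf⟩, ?_⟩
    have hcomp : (Fin.cons v g : Fin (m + 1) → α) ∘ Fin.cons 0 (Fin.succ ∘ f) =
        Fin.cons v (g ∘ f) := by
      funext i; cases i using Fin.cases <;> simp
    rw [hcomp]
    exact (Fin.strictMono_cons (α := αᵒᵈ)).2 ⟨fun _ => hv _, hanti⟩

theorem containsPattern_cons_cons_decPattern_iff {v w : α} (hv : ∀ i, g i < v) (hvw : v < w) :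
    ContainsPattern (Fin.cons v (Fin.cons w g) : Fin (m + 2) → α) (decPattern (d + 1)) ↔
      ContainsPattern g (decPattern d) := by
  refine ⟨fun h => ?_, fun h => ContainsPattern.of_comp (e := Fin.succ) Fin.strictMono_succ
    ((containsPattern_cons_decPattern_iff fun i => (hv i).trans hvw).2 h)⟩
  set G : Fin (m + 2) → α := Fin.cons v (Fin.cons w g)
  rw [containsPattern_decPattern_iff] at h ⊢
  obtain ⟨f, hf, hanti⟩ := h
  have htail : ∀ i : Fin d, 2 ≤ (f i.succ).val := fun i => by
    have h0 : (f 0).val < (f i.succ).val := hf i.succ_pos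
    by_contra! h1
    have hv0 : G (f 0) = v := by
      rw [show f 0 = 0 from Fin.ext (by rw [Fin.val_zero]; omega)]; rfl
    have hw1 : G (f i.succ) = w := by
      rw [show f i.succ = 1 from Fin.ext (by simp; omega)]; rfl
    exact (hanti i.succ_pos).not_gt (by simpa only [Function.comp_apply, hv0, hw1] using hvw)
  obtain ⟨f', hf', hff'⟩ := exists_strictMono_comp_eq (Fin.strictMono_addNat 2)
    (hf.comp Fin.strictMono_succ) fun i => mem_range_addNat_iff.2 (htail i)
  have hg : g ∘ f' = (G ∘ f) ∘ Fin.succ := by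
    rw [Function.comp_assoc, ← hff']; rfl
  exact ⟨f', hf', hg ▸ hanti.comp_strictMono Fin.strictMono_succ⟩

end Decreasing

def avoiders (n d : ℕ) : Set (Fin n → Fin n) := {π ∈ TSS132 n | Avoids π (decPattern d)}

/-- The patterns 132, 2341 and 3241 all satisfy `p 0 < p 2` and `p (last) < p 1`, which is all
that the extension lemmas below need. -/
theorem mem_avoiders_iff_of {n n' d d' : ℕ} {π : Fin n' → Fin n'} {σ : Fin n → Fin n}
    (hbij : Function.Bijective π ↔ Function.Bijective σ)
    (hpat : ∀ {k} (p : Fin (k + 3) → ℕ), p 0 < p 2 → p (Fin.last _) < p 1 →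
      (ContainsPattern π p ↔ ContainsPattern σ p))
    (hdec : ContainsPattern π (decPattern d') ↔ ContainsPattern σ (decPattern d)) :
    π ∈ avoiders n' d' ↔ σ ∈ avoiders n d :=
  and_congr (and_congr hbij <| and_congr (not_congr <| hpat ![1, 3, 2] (by decide) (by decide)) <|
    and_congr (not_congr <| hpat ![2, 3, 4, 1] (by decide) (by decide))
      (not_congr <| hpat ![3, 2, 4, 1] (by decide) (by decide))) (not_congr hdec)

section Extensions

variable {n : ℕ}

def appendMax (σ : Fin n → Fin n) : Fin (n + 1) → Fin (n + 1) :=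
  Fin.snoc (Fin.castSucc ∘ σ) (Fin.last n)

def prependMax (σ : Fin n → Fin n) : Fin (n + 1) → Fin (n + 1) :=
  Fin.cons (Fin.last n) (Fin.castSucc ∘ σ)

def prependMaxPair (σ : Fin n → Fin n) : Fin (n + 2) → Fin (n + 2) :=
  Fin.cons (Fin.last n).castSucc
    (Fin.cons (Fin.last (n + 1)) (Fin.castSucc ∘ Fin.castSucc ∘ σ))

theorem appendMax_mem_avoiders_iff {d : ℕ} {σ : Fin n → Fin n} :
    appendMax σ ∈ avoiders (n + 1) (d + 2) ↔ σ ∈ avoiders n (d + 2) := by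
  have hv : ∀ i, (Fin.castSucc ∘ σ) i < Fin.last n := fun i => Fin.castSucc_lt_last _
  have hcomp {k} {p : Fin k → ℕ} :=
    containsPattern_comp_left_iff (g := σ) (p := p) Fin.strictMono_castSucc
  refine mem_avoiders_iff_of ?_ (fun p _ hp => (containsPattern_snoc_iff hv hp).trans hcomp)
    ((containsPattern_snoc_iff hv (i := 0) (by simp [decPattern])).trans hcomp)
  rw [← Finite.injective_iff_bijective, ← Finite.injective_iff_bijective, appendMax,
    Fin.snoc_injective_iff, (Fin.castSucc_injective n).of_comp_iff]
  exact and_iff_left fun ⟨i, hi⟩ => (hv i).ne hi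

theorem prependMax_mem_avoiders_iff {d : ℕ} {σ : Fin n → Fin n} :
    prependMax σ ∈ avoiders (n + 1) (d + 1) ↔ σ ∈ avoiders n d := by
  have hv : ∀ i, (Fin.castSucc ∘ σ) i < Fin.last n := fun i => Fin.castSucc_lt_last _
  have hcomp {k} {p : Fin k → ℕ} :=
    containsPattern_comp_left_iff (g := σ) (p := p) Fin.strictMono_castSucc
  refine mem_avoiders_iff_of ?_ (fun p hp _ => ?_)
    ((containsPattern_cons_decPattern_iff hv).trans hcomp)
  · rw [← Finite.injective_iff_bijective, ← Finite.injective_iff_bijective, prependMax,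
      Fin.cons_injective_iff, (Fin.castSucc_injective n).of_comp_iff]
    exact and_iff_right fun ⟨i, hi⟩ => (hv i).ne hi
  · have hshift : (fun y : Fin n => prependMax σ (y.addNat 1)) = Fin.castSucc ∘ σ :=
      funext fun y => rfl
    refine (containsPattern_iff_of_prefix_gt (s := 1) (fun x hx y => ?_) (j := 2)
      (by rw [Fin.val_two]; omega) hp).trans (hshift ▸ hcomp)
    rw [show x = 0 from Fin.ext (by rw [Fin.val_zero]; omega), congrFun hshift y]
    exact hv y

theorem prependMaxPair_mem_avoiders_iff {d : ℕ} {σ : Fin n → Fin n} :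
    prependMaxPair σ ∈ avoiders (n + 2) (d + 1) ↔ σ ∈ avoiders n d := by
  have hv : ∀ i, (Fin.castSucc ∘ Fin.castSucc ∘ σ) i < (Fin.last n).castSucc :=
    fun i => Fin.castSucc_lt_castSucc_iff.2 (Fin.castSucc_lt_last _)
  have hvw : (Fin.last n).castSucc < Fin.last (n + 1) := Fin.castSucc_lt_last _
  have hemb : StrictMono (Fin.castSucc ∘ Fin.castSucc : Fin n → Fin (n + 2)) :=
    Fin.strictMono_castSucc.comp Fin.strictMono_castSucc
  have hcomp {k} {p : Fin k → ℕ} := containsPattern_comp_left_iff (g := σ) (p := p) hemb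
  refine mem_avoiders_iff_of ?_ (fun p hp _ => ?_)
    ((containsPattern_cons_cons_decPattern_iff hv hvw).trans hcomp)
  · rw [← Finite.injective_iff_bijective, ← Finite.injective_iff_bijective, prependMaxPair,
      Fin.cons_injective_iff, Fin.cons_injective_iff, ← Function.comp_assoc,
      hemb.injective.of_comp_iff]
    refine ⟨fun h => h.2.2, fun h => ⟨?_, fun ⟨i, hi⟩ => ((hv i).trans hvw).ne hi, h⟩⟩
    rintro ⟨i, hi⟩
    cases i using Fin.cases with
    | zero => exact hvw.ne' hi
    | succ i => exact (hv i).ne hi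
  · have hshift : (fun y : Fin n => prependMaxPair σ (y.addNat 2)) =
        Fin.castSucc ∘ Fin.castSucc ∘ σ :=
      funext fun y => rfl
    refine (containsPattern_iff_of_prefix_gt (s := 2) (fun x hx y => ?_) (j := 2)
      (by rw [Fin.val_two]) hp).trans (hshift ▸ hcomp)
    rw [congrFun hshift y]
    obtain ⟨_ | _ | x, hx'⟩ := x
    · exact hv y
    · exact (hv y).trans hvw
    · simp at hx

end Extensions

section Structure

variable {α : Type*} [LinearOrder α] {N : ℕ} {g : Fin N → α}

theorem lt_of_not_containsPattern_132 (hg : Function.Injective g)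
    (h132 : ¬ ContainsPattern g ![1, 3, 2]) {i j l : Fin N} (hij : i < j) (hjl : j < l)
    (hmax : ∀ x, g x ≤ g j) : g l < g i := by
  by_contra! hle
  exact h132 (containsPattern_132 hij hjl (lt_of_le_of_ne hle (hg.ne (hij.trans hjl).ne))
    (lt_of_le_of_ne (hmax l) (hg.ne hjl.ne')))

theorem false_of_max_between (hg : Function.Injective g) (h132 : ¬ ContainsPattern g ![1, 3, 2])
    (h2341 : ¬ ContainsPattern g ![2, 3, 4, 1]) (h3241 : ¬ ContainsPattern g ![3, 2, 4, 1])
    {i j q l : Fin N} (hij : i < j) (hjq : j < q) (hql : q < l) (hmax : ∀ x, g x ≤ g q) :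
    False := by
  have hli := lt_of_not_containsPattern_132 hg h132 (hij.trans hjq) hql hmax
  have hlj := lt_of_not_containsPattern_132 hg h132 hjq hql hmax
  have hiq : g i < g q := lt_of_le_of_ne (hmax i) (hg.ne (hij.trans hjq).ne)
  have hjq' : g j < g q := lt_of_le_of_ne (hmax j) (hg.ne hjq.ne)
  rcases lt_or_gt_of_ne (hg.ne hij.ne) with h | h
  · exact h2341 (containsPattern_2341 hij hjq hql hli h hjq')
  · exact h3241 (containsPattern_3241 hij hjq hql hlj h hiq)

end Structure

namespace TSS132

variable {n : ℕ} {π : Fin (n + 3) → Fin (n + 3)}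

theorem eq_zero_or_eq_one_or_eq_last (hπ : π ∈ TSS132 (n + 3)) {q : Fin (n + 3)}
    (hq : π q = Fin.last (n + 2)) : q = 0 ∨ q = 1 ∨ q = Fin.last (n + 2) := by
  obtain ⟨hbij, h132, h2341, h3241⟩ := hπ
  by_contra! h
  have h1q : (1 : Fin (n + 3)) < q := by
    simp only [Fin.lt_def, ne_eq, Fin.ext_iff, Fin.val_zero, Fin.val_one] at h ⊢
    omega
  exact false_of_max_between hbij.1 h132 h2341 h3241 (i := 0) (j := 1) (l := Fin.last _)
    Fin.zero_lt_one h1q (Fin.lt_last_iff_ne_last.2 h.2.2) (hq ▸ fun _ => Fin.le_last _)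

theorem apply_zero_of_apply_one (hπ : π ∈ TSS132 (n + 3)) (h1 : π 1 = Fin.last (n + 2)) :
    π 0 = (Fin.last (n + 1)).castSucc := by
  obtain ⟨hbij, h132, -, -⟩ := hπ
  obtain ⟨r, hr⟩ := hbij.2 (Fin.last (n + 1)).castSucc
  obtain ⟨_ | _ | r, hr'⟩ := r
  · exact hr
  · exact absurd (hr.symm.trans h1) (Fin.castSucc_lt_last _).ne
  · have hlt := lt_of_not_containsPattern_132 hbij.1 h132 (i := 0) (j := 1) (l := ⟨r + 2, hr'⟩)
      Fin.zero_lt_one (by simp [Fin.lt_def]) (h1 ▸ fun _ => Fin.le_last _)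
    rw [hr, Fin.lt_def] at hlt
    have h01 : π 0 = π 1 := h1 ▸ Fin.ext (by simp at hlt ⊢; omega)
    exact absurd (hbij.1 h01) Fin.zero_ne_one

end TSS132

section Decomposition

variable {n : ℕ}

theorem appendMax_last (σ : Fin n → Fin n) : appendMax σ (Fin.last n) = Fin.last n :=
  Fin.snoc_last ..

theorem prependMax_succ (σ : Fin n → Fin n) (i : Fin n) :
    prependMax σ i.succ = (σ i).castSucc :=
  rfl

theorem prependMaxPair_succ_succ (σ : Fin n → Fin n) (i : Fin n) :
    prependMaxPair σ i.succ.succ = (σ i).castSucc.castSucc :=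
  rfl

theorem appendMax_injective : Function.Injective (appendMax : (Fin n → Fin n) → _) :=
  fun _ _ h => (Fin.castSucc_injective n).comp_left (Fin.snoc_left_injective _ h)

theorem prependMax_injective : Function.Injective (prependMax : (Fin n → Fin n) → _) :=
  fun _ _ h => (Fin.castSucc_injective n).comp_left (Fin.cons_right_injective _ h)

theorem prependMaxPair_injective : Function.Injective (prependMaxPair : (Fin n → Fin n) → _) :=
  fun _ _ h => ((Fin.castSucc_injective _).comp (Fin.castSucc_injective n)).comp_left
    (Fin.cons_right_injective _ (Fin.cons_right_injective _ h))

theorem exists_castSucc_comp_eq {k : ℕ} {τ : Fin k → Fin (n + 1)}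
    (h : ∀ i, τ i ≠ Fin.last n) :
    ∃ σ : Fin k → Fin n, Fin.castSucc ∘ σ = τ :=
  ⟨fun i => (τ i).castPred (h i), funext fun _ => Fin.castSucc_castPred _ _⟩

theorem exists_appendMax_eq {π : Fin (n + 1) → Fin (n + 1)} (hπ : Function.Injective π)
    (hlast : π (Fin.last n) = Fin.last n) : ∃ σ, appendMax σ = π := by
  obtain ⟨σ, hσ⟩ := exists_castSucc_comp_eq (τ := Fin.init π) fun i h =>
    (Fin.castSucc_lt_last i).ne (hπ (h.trans hlast.symm))
  exact ⟨σ, by rw [appendMax, hσ, ← hlast, Fin.snoc_init_self]⟩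

theorem exists_prependMax_eq {π : Fin (n + 1) → Fin (n + 1)} (hπ : Function.Injective π)
    (h0 : π 0 = Fin.last n) : ∃ σ, prependMax σ = π := by
  obtain ⟨σ, hσ⟩ := exists_castSucc_comp_eq (τ := Fin.tail π) fun i h =>
    Fin.succ_ne_zero i (hπ (h.trans h0.symm))
  exact ⟨σ, by rw [prependMax, hσ, ← h0, Fin.cons_self_tail]⟩

theorem exists_prependMaxPair_eq {π : Fin (n + 2) → Fin (n + 2)} (hπ : Function.Injective π)
    (h0 : π 0 = (Fin.last n).castSucc) (h1 : π 1 = Fin.last (n + 1)) :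
    ∃ σ, prependMaxPair σ = π := by
  obtain ⟨τ, hτ⟩ := exists_castSucc_comp_eq (τ := Fin.tail (Fin.tail π)) fun i h =>
    Fin.succ_ne_zero i (Fin.succ_injective _ (hπ (h.trans h1.symm)))
  obtain ⟨σ, hσ⟩ := exists_castSucc_comp_eq (τ := τ) fun i h => Fin.succ_ne_zero _
    (hπ ((congrFun hτ i).symm.trans ((congrArg Fin.castSucc h).trans h0.symm)))
  refine ⟨σ, ?_⟩
  rw [prependMaxPair, hσ, hτ, ← h0, ← h1]
  change Fin.cons (π 0) (Fin.cons (Fin.tail π 0) (Fin.tail (Fin.tail π))) = π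
  rw [Fin.cons_self_tail, Fin.cons_self_tail]

theorem avoiders_eq_union (n d : ℕ) :
    avoiders (n + 3) (d + 3) = appendMax '' avoiders (n + 2) (d + 3) ∪
      prependMax '' avoiders (n + 2) (d + 2) ∪ prependMaxPair '' avoiders (n + 1) (d + 2) := by
  ext π
  constructor
  · intro hπ
    have hinj := hπ.1.1.injective
    obtain ⟨q, hq⟩ := hπ.1.1.2 (Fin.last _)
    rcases TSS132.eq_zero_or_eq_one_or_eq_last hπ.1 hq with rfl | rfl | rfl
    · obtain ⟨σ, rfl⟩ := exists_prependMax_eq hinj hq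
      exact Or.inl (Or.inr ⟨σ, prependMax_mem_avoiders_iff.1 hπ, rfl⟩)
    · obtain ⟨σ, rfl⟩ :=
        exists_prependMaxPair_eq hinj (TSS132.apply_zero_of_apply_one hπ.1 hq) hq
      exact Or.inr ⟨σ, prependMaxPair_mem_avoiders_iff.1 hπ, rfl⟩
    · obtain ⟨σ, rfl⟩ := exists_appendMax_eq hinj hq
      exact Or.inl (Or.inl ⟨σ, appendMax_mem_avoiders_iff.1 hπ, rfl⟩)
  · rintro ((⟨σ, hσ, rfl⟩ | ⟨σ, hσ, rfl⟩) | ⟨σ, hσ, rfl⟩)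
    · exact appendMax_mem_avoiders_iff.2 hσ
    · exact prependMax_mem_avoiders_iff.2 hσ
    · exact prependMaxPair_mem_avoiders_iff.2 hσ

theorem card_avoiders_recurrence (n d : ℕ) :
    Nat.card (avoiders (n + 3) (d + 3)) = Nat.card (avoiders (n + 2) (d + 3)) +
      Nat.card (avoiders (n + 2) (d + 2)) + Nat.card (avoiders (n + 1) (d + 2)) := by
  have h12 : Disjoint (appendMax '' avoiders (n + 2) (d + 3))
      (prependMax '' avoiders (n + 2) (d + 2)) :=
    Set.disjoint_image_image fun σ _ τ _ h => by
      have := congrFun h (Fin.last _).succ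
      rw [prependMax_succ, Fin.succ_last, appendMax_last] at this
      exact (Fin.castSucc_lt_last _).ne' this
  have h3 : Disjoint (appendMax '' avoiders (n + 2) (d + 3) ∪
      prependMax '' avoiders (n + 2) (d + 2)) (prependMaxPair '' avoiders (n + 1) (d + 2)) := by
    refine Set.disjoint_union_left.2 ⟨Set.disjoint_image_image fun σ _ τ _ h => ?_,
      Set.disjoint_image_image fun σ _ τ _ h => ?_⟩
    · have := congrFun h (Fin.last _).succ.succ
      rw [prependMaxPair_succ_succ, Fin.succ_last, Fin.succ_last, appendMax_last] at this
      exact (Fin.castSucc_lt_last _).ne' this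
    · exact (Fin.castSucc_lt_last _).ne' (congrFun h 0)
  simp only [Nat.card_coe_set_eq]
  rw [avoiders_eq_union, Set.ncard_union_eq h3, Set.ncard_union_eq h12,
    Set.ncard_image_of_injective _ appendMax_injective,
    Set.ncard_image_of_injective _ prependMax_injective,
    Set.ncard_image_of_injective _ prependMaxPair_injective]

end Decomposition

section Counting

theorem avoiders_two (n : ℕ) : avoiders n 2 = {id} := by
  ext π
  refine ⟨fun ⟨⟨hbij, _⟩, h21⟩ => StrictMono.eq_id fun i j hij => ?_, ?_⟩
  · by_contra! hji
    refine h21 (containsPattern_of_forall_lt (by decide) (f := ![i, j]) ?_ fun a b hab => ?_)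
    · simp [Fin.strictMono_iff_lt_succ, hij]
    · have hji' := lt_of_le_of_ne hji (hbij.1.ne hij.ne')
      fin_cases a <;> fin_cases b <;> simp [decPattern] at hab ⊢; order
  · rintro rfl
    exact ⟨⟨Function.bijective_id,
      not_containsPattern_of_strictMono strictMono_id (i := 1) (j := 2) (by decide) (by decide),
      not_containsPattern_of_strictMono strictMono_id (i := 2) (j := 3) (by decide) (by decide),
      not_containsPattern_of_strictMono strictMono_id (i := 0) (j := 1) (by decide) (by decide)⟩,
      not_containsPattern_of_strictMono strictMono_id (i := 0) (j := 1) (by decide) (by decide)⟩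

theorem avoiders_of_lt {n d : ℕ} (hn : n < 3) (hnd : n < d) :
    avoiders n d = {π | Function.Bijective π} := by
  ext π
  exact ⟨fun h => h.1.1, fun h => ⟨⟨h, not_containsPattern_of_lt (by omega),
    not_containsPattern_of_lt (by omega), not_containsPattern_of_lt (by omega)⟩,
    not_containsPattern_of_lt hnd⟩⟩

theorem card_avoiders_of_lt {n d : ℕ} (hn : n < 3) (hnd : n < d) :
    Nat.card (avoiders n d) = n.factorial := by
  rw [avoiders_of_lt hn hnd]
  calc Nat.card {π : Fin n → Fin n | Function.Bijective π}
      _ = Nat.card (Fin n ≃ Fin n) := Nat.card_congr Equiv.bijectiveEquiv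
      _ = n.factorial := by rw [Nat.card_perm, Nat.card_fin]

theorem card_avoiders_two (n : ℕ) : Nat.card (avoiders n 2) = 1 := by
  rw [avoiders_two, Nat.card_unique]

theorem card_avoiders_three {n : ℕ} (hn : 2 ≤ n) :
    (Nat.card (avoiders n 3) : ℚ) = 2 * n - 2 := by
  induction n, hn using Nat.le_induction with
  | base => rw [card_avoiders_of_lt (by omega) (by omega)]; norm_num
  | succ n hn ih =>
    obtain ⟨n, rfl⟩ : ∃ m, n = m + 2 := ⟨n - 2, by omega⟩
    rw [card_avoiders_recurrence n 0, card_avoiders_two, card_avoiders_two]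
    push_cast at ih ⊢
    linarith

theorem card_avoiders_four {n : ℕ} (hn : 3 ≤ n) :
    (Nat.card (avoiders n 4) : ℚ) = 2 * n ^ 2 - 8 * n + 11 := by
  induction n, hn using Nat.le_induction with
  | base =>
    rw [card_avoiders_recurrence 0 1, card_avoiders_of_lt (n := 2) (d := 4) (by omega) (by omega),
      card_avoiders_of_lt (n := 2) (d := 3) (by omega) (by omega),
      card_avoiders_of_lt (n := 1) (d := 3) (by omega) (by omega)]
    norm_num
  | succ n hn ih =>
    obtain ⟨n, rfl⟩ : ∃ m, n = m + 2 := ⟨n - 2, by omega⟩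
    rw [card_avoiders_recurrence n 1]
    have h₁ := card_avoiders_three (n := n + 2) (by omega)
    have h₂ := card_avoiders_three (n := n + 1) (by omega)
    push_cast at ih h₁ h₂ ⊢
    linear_combination ih + h₁ + h₂

theorem card_avoiders_five {n : ℕ} (hn : 4 ≤ n) :
    (Nat.card (avoiders n 5) : ℚ) = 4 / 3 * n ^ 3 - 12 * n ^ 2 + 128 / 3 * n - 52 := by
  induction n, hn using Nat.le_induction with
  | base =>
    have h₃ : Nat.card (avoiders 3 5) = 5 := by
      rw [card_avoiders_recurrence 0 2, card_avoiders_of_lt (n := 2) (d := 5) (by omega) (by omega),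
        card_avoiders_of_lt (n := 2) (d := 4) (by omega) (by omega),
        card_avoiders_of_lt (n := 1) (d := 4) (by omega) (by omega)]
      rfl
    rw [card_avoiders_recurrence 1 2, Nat.cast_add, Nat.cast_add, h₃,
      card_avoiders_four (n := 3) le_rfl,
      card_avoiders_of_lt (n := 2) (d := 4) (by omega) (by omega)]
    norm_num
  | succ n hn ih =>
    obtain ⟨n, rfl⟩ : ∃ m, n = m + 3 := ⟨n - 3, by omega⟩
    rw [card_avoiders_recurrence (n + 1) 2]
    have h₁ := card_avoiders_four (n := n + 3) (by omega)
    have h₂ := card_avoiders_four (n := n + 2) (by omega)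
    push_cast at ih h₁ h₂ ⊢
    linear_combination ih + h₁ + h₂

end Counting

theorem stmt_14 (n : ℕ) (hn : 4 ≤ n) :
    (Nat.card ↥{π ∈ TSS132 n | Avoids π ![5,4,3,2,1]} : ℚ) =
      4/3 * n^3 - 12 * n^2 + 128/3 * n - 52 := by
  have hpat : (![5, 4, 3, 2, 1] : Fin 5 → ℕ) = decPattern 5 := by decide
  rw [hpat]
  exact card_avoiders_five hn
end
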